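/- Let X and Y be metric spaces with X complete, and let f : X → Y be a continuous surjection that is uniformly open, i.e., for every r > 0 there exists δ > 0 such that B(f(x), δ) ⊆ f(B(x, r)) for all x ∈ X. Then f is density-surjective: there exists Z ⊆ X with dens(Z) = dens(Y) such that f(Z) = Y. -/

import Mathlib

/-!
Take `D` dense in `Y` with `#D = dens Y`. If `D` is finite then `Y = D`, and a section of `f`
works. Otherwise, uniform openness gives for each scale `2⁻ⁿ` and each `x` a way to lift any
point of `D` that is `δₙ`-close to `f x` to a point `2⁻ⁿ`-close to `x`. Closing a lift of `D`
under these countably many lifting maps gives `T` with `#T ≤ #D`. For `y ∈ Y`, lifting a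
sequence of points of `D` converging fast to `y` step by step produces a Cauchy sequence in `T`,
whose limit in `closure T` maps to `y`. Finally `dens (closure T) ≤ #T`, while
`dens Y ≤ dens (closure T)` because `f` maps `closure T` continuously onto `Y`.
-/

noncomputable def densityCharacter (X : Type*) [TopologicalSpace X] : Cardinal :=
  sInf {c | ∃ s : Set X, Dense s ∧ Cardinal.mk s = c}

open Cardinal hiding univ
open Metric Set Filter Topology Function

section DensityCharacter

variable {A : Type*} [TopologicalSpace A]

lemma densityCharacter_le_mk {s : Set A} (hs : Dense s) : densityCharacter A ≤ #s :=
  csInf_le' ⟨s, hs, rfl⟩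

variable (A) in
lemma exists_dense_mk_eq_densityCharacter : ∃ s : Set A, Dense s ∧ #s = densityCharacter A :=
  csInf_mem (⟨_, univ, dense_univ, rfl⟩ : {c | ∃ s : Set A, Dense s ∧ #s = c}.Nonempty)

lemma densityCharacter_closure_le_mk (T : Set A) : densityCharacter (closure T) ≤ #T := by
  have hdense : Dense (Subtype.val ⁻¹' T : Set (closure T)) := by
    intro x
    rw [closure_subtype, image_preimage_eq_inter_range, Subtype.range_val,
      inter_eq_self_of_subset_left subset_closure]
    exact x.2
  exact (densityCharacter_le_mk hdense).trans
    (mk_preimage_of_injective _ _ Subtype.val_injective)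

lemma densityCharacter_eq_mk_of_lt_aleph0 [T1Space A] (h : densityCharacter A < ℵ₀) :
    densityCharacter A = #A := by
  obtain ⟨s, hs, hsA⟩ := exists_dense_mk_eq_densityCharacter A
  have hfin : s.Finite := lt_aleph0_iff_set_finite.1 (hsA ▸ h)
  have hs_univ : s = univ := by rw [← hfin.isClosed.closure_eq, hs.closure_eq]
  rw [← hsA, hs_univ, mk_univ]

lemma densityCharacter_le_of_image_eq_univ {A B : Type u} [TopologicalSpace A]
    [TopologicalSpace B] {f : A → B} (hf : Continuous f) {Z : Set A} (hZ : f '' Z = univ) :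
    densityCharacter B ≤ densityCharacter Z := by
  obtain ⟨s, hs, hsZ⟩ := exists_dense_mk_eq_densityCharacter Z
  have hsurj : Surjective (Z.domRestrict f) := by
    rw [← range_eq_univ, range_domRestrict, hZ]
  calc densityCharacter B ≤ #(Z.domRestrict f '' s) :=
        densityCharacter_le_mk (hsurj.denseRange.dense_image (hf.comp continuous_subtype_val) hs)
    _ ≤ #s := mk_image_le
    _ = densityCharacter Z := hsZ

end DensityCharacter

lemma exists_superset_mapsTo_mk_le {ι α : Type u} (F : ι → α → α) (A : Set α) :
    ∃ T : Set α, A ⊆ T ∧ (∀ i, MapsTo (F i) T T) ∧ #T ≤ max ℵ₀ #ι * #A := by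
  refine ⟨range fun p : List ι × A => p.1.foldr F p.2, fun a ha => ⟨([], ⟨a, ha⟩), rfl⟩,
    ?_, ?_⟩
  · rintro i _ ⟨⟨l, a⟩, rfl⟩
    exact ⟨(i :: l, a), rfl⟩
  · calc #(range fun p : List ι × A => p.1.foldr F p.2) ≤ #(List ι × A) := mk_range_le
      _ = #(List ι) * #A := by rw [mk_prod, lift_id, lift_id]
      _ ≤ max ℵ₀ #ι * #A := mul_le_mul_left (mk_list_le_max ι) _

section UniformlyOpen

variable {X Y : Type*} [PseudoMetricSpace X] [MetricSpace Y] {f : X → Y}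

lemma exists_tendsto_zero_ball_subset_image_ball
    (huo : ∀ r : ℝ, 0 < r → ∃ δ : ℝ, 0 < δ ∧ ∀ x : X, ball (f x) δ ⊆ f '' ball x r) :
    ∃ δ : ℕ → ℝ, (∀ n, 0 < δ n) ∧ Tendsto δ atTop (𝓝 0) ∧
      ∀ n x, ball (f x) (δ n) ⊆ f '' ball x ((1 / 2) ^ n) := by
  choose δ hδ hball using fun n : ℕ => huo ((1 / 2) ^ n) (by positivity)
  refine ⟨fun n => min (δ n) ((1 / 2) ^ n), fun n => lt_min (hδ n) (by positivity), ?_,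
    fun n x => (ball_subset_ball (min_le_left _ _)).trans (hball n x)⟩
  exact squeeze_zero (fun n => (lt_min (hδ n) (by positivity)).le) (fun n => min_le_right _ _)
    (tendsto_pow_atTop_nhds_zero_of_lt_one (by norm_num) (by norm_num))

lemma image_closure_eq_univ_of_forall_lift [CompleteSpace X] (hf : Continuous f) {D : Set Y}
    (hD : Dense D) {T : Set X} (hDT : D ⊆ f '' T) {δ : ℕ → ℝ} (hδ : ∀ n, 0 < δ n)
    (hδ0 : Tendsto δ atTop (𝓝 0))
    (hlift : ∀ n, ∀ x ∈ T, ∀ d ∈ D, dist d (f x) < δ n →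
      ∃ x' ∈ T, dist x x' < (1 / 2) ^ n ∧ f x' = d) :
    f '' closure T = univ := by
  refine eq_univ_of_forall fun y => ?_
  -- Truncated subtraction makes `ε 0 = δ 0 / 2`; in general `ε (n + 1) ≤ δ n / 2`.
  let ε : ℕ → ℝ := fun n => min (δ n) (δ (n - 1)) / 2
  have hε : ∀ n, 0 < ε n := fun n => half_pos (lt_min (hδ n) (hδ _))
  have hε_le : ∀ n, ε n ≤ δ n / 2 := fun n =>
    div_le_div_of_nonneg_right (min_le_left _ _) zero_le_two
  have hε_succ_le : ∀ n, ε (n + 1) ≤ δ n / 2 := fun n =>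
    div_le_div_of_nonneg_right (min_le_right (δ (n + 1)) (δ n)) zero_le_two
  choose d hdy hdD using fun n => Metric.dense_iff.1 hD y (ε n) (hε n)
  obtain ⟨x₀, hx₀T, hx₀⟩ := hDT (hdD 0)
  have : Nonempty X := ⟨x₀⟩
  choose! next hnextT hnext_dist hnext_eq using hlift
  let x : ℕ → X := fun n => Nat.rec x₀ (fun n xn => next n xn (d (n + 1))) n
  have hd_close : ∀ n, dist (d (n + 1)) (d n) < δ n := fun n =>
    calc dist (d (n + 1)) (d n) ≤ dist (d (n + 1)) y + dist (d n) y :=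
          dist_triangle_right _ _ _
      _ < ε (n + 1) + ε n := add_lt_add (hdy (n + 1)) (hdy n)
      _ ≤ δ n := by linarith [hε_le n, hε_succ_le n]
  have hx : ∀ n, x n ∈ T ∧ f (x n) = d n := by
    intro n
    induction n with
    | zero => exact ⟨hx₀T, hx₀⟩
    | succ n ih =>
      have h := ih.2 ▸ hd_close n
      exact ⟨hnextT n _ ih.1 _ (hdD _) h, hnext_eq n _ ih.1 _ (hdD _) h⟩
  have hx_cauchy : CauchySeq x := by
    refine cauchySeq_of_le_geometric (1 / 2) 1 (by norm_num) fun n => ?_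
    rw [one_mul]
    have h := (hx n).2 ▸ hd_close n
    exact (hnext_dist n _ (hx n).1 _ (hdD _) h).le
  obtain ⟨x', hx'⟩ := cauchySeq_tendsto_of_complete hx_cauchy
  have hd_tendsto : Tendsto d atTop (𝓝 y) := by
    refine tendsto_iff_dist_tendsto_zero.2 (squeeze_zero (fun _ => dist_nonneg)
      (fun n => (hdy n).le) ?_)
    have hδ0' : Tendsto (fun n => δ n / 2) atTop (𝓝 0) := by simpa using hδ0.div_const 2
    exact squeeze_zero (fun n => (hε n).le) hε_le hδ0'
  refine ⟨x', mem_closure_of_tendsto hx' (Eventually.of_forall fun n => (hx n).1), ?_⟩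
  refine tendsto_nhds_unique ((hf.tendsto x').comp hx') ?_
  simpa only [comp_def, (hx _).2] using hd_tendsto

end UniformlyOpen

lemma exists_mk_le_image_closure_eq_univ {X Y : Type u} [PseudoMetricSpace X] [MetricSpace Y]
    [CompleteSpace X] {f : X → Y} (hf : Continuous f) (hs : Surjective f)
    (huo : ∀ r : ℝ, 0 < r → ∃ δ : ℝ, 0 < δ ∧ ∀ x : X, ball (f x) δ ⊆ f '' ball x r)
    {D : Set Y} (hD : Dense D) :
    ∃ T : Set X, #T ≤ max ℵ₀ #D ∧ f '' closure T = univ := by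
  obtain ⟨δ, hδ, hδ0, hball⟩ := exists_tendsto_zero_ball_subset_image_ball huo
  have hstep : ∀ n x y, ∃ x', dist y (f x) < δ n → dist x x' < (1 / 2) ^ n ∧ f x' = y := by
    intro n x y
    by_cases h : dist y (f x) < δ n
    · obtain ⟨x', hx', rfl⟩ := hball n x h
      exact ⟨x', fun _ => ⟨mem_ball'.1 hx', rfl⟩⟩
    · exact ⟨x, fun h' => absurd h' h⟩
  choose lift hlift using hstep
  obtain ⟨T, hDT, hT, hT_card⟩ :=
    exists_superset_mapsTo_mk_le (fun (p : ℕ × D) x => lift p.1 x p.2) (surjInv hs '' D)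
  refine ⟨T, hT_card.trans ?_, image_closure_eq_univ_of_forall_lift hf hD ?_ hδ hδ0 ?_⟩
  · have hκ : ℵ₀ ≤ max ℵ₀ #D := le_max_left _ _
    have hι : #(ℕ × D) ≤ max ℵ₀ #D := by
      simpa [mk_prod] using mul_le_max ℵ₀ #D
    calc max ℵ₀ #(ℕ × D) * #(surjInv hs '' D) ≤ max ℵ₀ #D * max ℵ₀ #D :=
          mul_le_mul' (max_le hκ hι) (mk_image_le.trans (le_max_right _ _))
      _ = max ℵ₀ #D := mul_eq_self hκ
  · rintro d hd
    exact ⟨surjInv hs d, hDT (mem_image_of_mem _ hd), surjInv_eq hs d⟩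
  · intro n x hx d hd hdist
    exact ⟨lift n x d, hT (n, ⟨d, hd⟩) hx, hlift n x d hdist⟩

theorem stmt8 {X Y : Type u} [MetricSpace X] [MetricSpace Y] [CompleteSpace X]
    (f : X → Y) (hf : Continuous f) (hs : Function.Surjective f)
    (huo : ∀ r : ℝ, 0 < r → ∃ δ : ℝ, 0 < δ ∧
      ∀ x : X, Metric.ball (f x) δ ⊆ f '' Metric.ball x r) :
    ∃ Z : Set X, densityCharacter Z = densityCharacter Y ∧ f '' Z = Set.univ := by
  obtain ⟨T, hTY, hT⟩ : ∃ T : Set X, #T ≤ densityCharacter Y ∧ f '' closure T = univ := by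
    rcases lt_or_ge (densityCharacter Y) ℵ₀ with hfin | hinf
    · refine ⟨range (surjInv hs), ?_, eq_univ_of_univ_subset ?_⟩
      · rw [densityCharacter_eq_mk_of_lt_aleph0 hfin]
        exact mk_range_le
      · rintro y -
        exact ⟨surjInv hs y, subset_closure (mem_range_self y), surjInv_eq hs y⟩
    · obtain ⟨D, hD, hDY⟩ := exists_dense_mk_eq_densityCharacter Y
      obtain ⟨T, hTD, hT⟩ := exists_mk_le_image_closure_eq_univ hf hs huo hD
      exact ⟨T, hTD.trans (by rw [hDY, max_eq_right hinf]), hT⟩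
  exact ⟨closure T, le_antisymm ((densityCharacter_closure_le_mk T).trans hTY)
    (densityCharacter_le_of_image_eq_univ hf hT), hT⟩
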